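/- arXiv:2105.14153 — 5 statements merged into one kernel-verified Lean document; each statement's English description precedes it below -/
import Mathlib

section
/- Assume the tentative-update setting, and additionally that f : ℝⁿ → ℝ is convex and differentiable with l(y) ≤ f(y) for all y ∈ ℝⁿ and l(x) = f(x). If x itself is a global minimizer of y ↦ l(y) + g(y) + (1/2)⟨y − x, (H + λI)(y − x)⟩ (i.e., x⁺ = x), then x is a global minimizer of f + g over ℝⁿ. -/
open scoped RealInnerProductSpace
open Filter Set Topology

/-!
Along the segment `x + t • (y - x)`, convexity makes `φ` drop at least linearly in `t`, while a
degree-two homogeneous penalty only grows like `t²`. So a minimizer of `φ + Q(· - x)` at `x`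
already minimizes `φ`; applied to `φ = l + g` and the minorant `l ≤ f` tight at `x`, this gives
`f x + g x = l x + g x ≤ l y + g y ≤ f y + g y`.
-/

lemma le_of_forall_mem_Ioc_le_add_mul {a b c : ℝ} (h : ∀ t ∈ Ioc (0 : ℝ) 1, a ≤ b + t * c) :
    a ≤ b := by
  have hlim : Tendsto (fun t : ℝ => b + t * c) (𝓝[>] 0) (𝓝 b) := by
    have : Tendsto (fun t : ℝ => b + t * c) (𝓝 0) (𝓝 (b + 0 * c)) :=
      (continuous_const.add (continuous_id.mul continuous_const)).tendsto 0
    simpa using this.mono_left nhdsWithin_le_nhds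
  exact ge_of_tendsto hlim (Filter.mem_of_superset (Ioc_mem_nhdsGT one_pos) h)

lemma ConvexOn.le_of_le_add_homogeneous_sq {E : Type*} [AddCommGroup E] [Module ℝ E]
    {φ Q : E → ℝ} (hφ : ConvexOn ℝ univ φ) (hQ : ∀ (t : ℝ) v, Q (t • v) = t ^ 2 * Q v)
    {x : E} (hmin : ∀ y, φ x ≤ φ y + Q (y - x)) (y : E) : φ x ≤ φ y := by
  refine le_of_forall_mem_Ioc_le_add_mul (c := Q (y - x)) fun t ⟨ht0, ht1⟩ => ?_
  have hseg : x + t • (y - x) = (1 - t) • x + t • y := by module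
  have hconv : φ (x + t • (y - x)) ≤ (1 - t) * φ x + t * φ y := by
    rw [hseg]
    exact hφ.2 (mem_univ x) (mem_univ y) (by linarith) ht0.le (by ring)
  have hstep := hmin (x + t • (y - x))
  rw [add_sub_cancel_left, hQ] at hstep
  have : t * φ x ≤ t * (φ y + t * Q (y - x)) := by nlinarith
  exact le_of_mul_le_mul_left this ht0

lemma EuclideanSpace.inner_toEuclideanLin_smul_self {n : ℕ} (A : Matrix (Fin n) (Fin n) ℝ)
    (t : ℝ) (v : EuclideanSpace ℝ (Fin n)) :
    ⟪t • v, Matrix.toEuclideanLin A (t • v)⟫ = t ^ 2 * ⟪v, Matrix.toEuclideanLin A v⟫ := by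
  rw [map_smul, real_inner_smul_left, real_inner_smul_right]
  ring

theorem stmt_3_general (n : ℕ)
    (l g f : EuclideanSpace ℝ (Fin n) → ℝ)
    (hl : ConvexOn ℝ Set.univ l) (hg : ConvexOn ℝ Set.univ g)
    (H : Matrix (Fin n) (Fin n) ℝ)
    (lam : ℝ)
    (x : EuclideanSpace ℝ (Fin n))
    (hle : ∀ y, l y ≤ f y) (htight : l x = f x)
    (hmin : ∀ y,
      l x + g x + (1/2) * ⟪x - x, Matrix.toEuclideanLin (H + lam • 1) (x - x)⟫ ≤
      l y + g y + (1/2) * ⟪y - x, Matrix.toEuclideanLin (H + lam • 1) (y - x)⟫) :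
    ∀ y, f x + g x ≤ f y + g y := by
  intro y
  have hmin_lg : ∀ y, (l + g) x ≤ (l + g) y +
      (1/2) * ⟪y - x, Matrix.toEuclideanLin (H + lam • 1) (y - x)⟫ := fun y => by
    simpa [add_assoc] using hmin y
  have hlg := (hl.add hg).le_of_le_add_homogeneous_sq
    (Q := fun v => (1/2) * ⟪v, Matrix.toEuclideanLin (H + lam • 1) v⟫)
    (fun t v => by simp only [EuclideanSpace.inner_toEuclideanLin_smul_self]; ring) hmin_lg y
  simp only [Pi.add_apply] at hlg
  linarith [hle y]

/-- Tentative-update setting: if `x` itself minimizes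
`y ↦ l(y) + g(y) + (1/2)⟨y − x, (H + λI)(y − x)⟩` (i.e. `x⁺ = x`), and `l` is a convex
minorant of the convex differentiable `f` tight at `x`, then `x` globally minimizes `f + g`. -/
theorem stmt_3 (n : ℕ)
    (l g f : EuclideanSpace ℝ (Fin n) → ℝ)
    (hl : ConvexOn ℝ Set.univ l) (hg : ConvexOn ℝ Set.univ g)
    (H : Matrix (Fin n) (Fin n) ℝ)
    (hH : ∀ z : EuclideanSpace ℝ (Fin n), 0 ≤ ⟪z, Matrix.toEuclideanLin H z⟫)
    (lam : ℝ) (hlam : 0 < lam)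
    (x : EuclideanSpace ℝ (Fin n))
    (hf : ConvexOn ℝ Set.univ f) (hfd : Differentiable ℝ f)
    (hle : ∀ y, l y ≤ f y) (htight : l x = f x)
    (hmin : ∀ y,
      l x + g x + (1/2) * ⟪x - x, Matrix.toEuclideanLin (H + lam • 1) (x - x)⟫ ≤
      l y + g y + (1/2) * ⟪y - x, Matrix.toEuclideanLin (H + lam • 1) (y - x)⟫) :
    ∀ y, f x + g x ≤ f y + g y :=
  stmt_3_general n l g f hl hg H lam x hle htight hmin
end

section
/- Assume the tentative-update setting, and additionally that f : ℝⁿ → ℝ is convex and differentiable with l(y) ≤ f(y) for all y ∈ ℝⁿ and l(x) = f(x). If x⁺ = x, then x is a global minimizer of l + g over ℝⁿ, and consequently inf_{y ∈ ℝⁿ} ( l(y) + g(y) ) = f(x) + g(x); i.e., the lower bound obtained by minimizing l + g is tight. -/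
open scoped RealInnerProductSpace
open Filter Topology Set

/-!
Along the segment `z = x + t (y - x)`, convexity of `φ = l + g` and minimality of `x` for
`φ + q(· - x)` with `q` a quadratic form give `t (φ x - φ y) ≤ t² q (y - x)`. Dividing by `t`
and letting `t → 0⁺` gives `φ x ≤ φ y`.
-/

theorem ConvexOn.le_of_le_add_quadratic {E : Type*} [AddCommGroup E] [Module ℝ E]
    {φ Q : E → ℝ} (hφ : ConvexOn ℝ univ φ) (hQ : ∀ (t : ℝ) v, Q (t • v) = t ^ 2 * Q v)
    {x : E} (h : ∀ z, φ x ≤ φ z + Q (z - x)) (y : E) : φ x ≤ φ y := by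
  have h_segment : ∀ t ∈ Ioc (0 : ℝ) 1, φ x - φ y ≤ t * Q (y - x) := by
    rintro t ⟨ht0, ht1⟩
    have h_conv : φ ((1 - t) • x + t • y) ≤ (1 - t) * φ x + t * φ y :=
      hφ.2 (mem_univ x) (mem_univ y) (by linarith) ht0.le (by ring)
    have h_disp : (1 - t) • x + t • y - x = t • (y - x) := by module
    have h_min := h ((1 - t) • x + t • y)
    rw [h_disp, hQ] at h_min
    have : t * (φ x - φ y) ≤ t * (t * Q (y - x)) := by nlinarith
    exact le_of_mul_le_mul_left this ht0
  have h_lim : Tendsto (fun t : ℝ => t * Q (y - x)) (𝓝[>] 0) (𝓝 0) :=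
    ((continuous_mul_const _).tendsto' 0 0 (zero_mul _)).mono_left nhdsWithin_le_nhds
  have h_eventually : ∀ᶠ t in 𝓝[>] (0 : ℝ), φ x - φ y ≤ t * Q (y - x) :=
    eventually_of_mem (Ioc_mem_nhdsGT one_pos) h_segment
  linarith [ge_of_tendsto h_lim h_eventually]

theorem stmt_4_general (n : ℕ)
    (l g f : EuclideanSpace ℝ (Fin n) → ℝ)
    (hl : ConvexOn ℝ Set.univ l) (hg : ConvexOn ℝ Set.univ g)
    (H : Matrix (Fin n) (Fin n) ℝ)
    (lam : ℝ)
    (x : EuclideanSpace ℝ (Fin n))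
    (htight : l x = f x)
    (hmin : ∀ y,
      l x + g x + (1/2) * ⟪x - x, Matrix.toEuclideanLin (H + lam • 1) (x - x)⟫ ≤
      l y + g y + (1/2) * ⟪y - x, Matrix.toEuclideanLin (H + lam • 1) (y - x)⟫) :
    (∀ y, l x + g x ≤ l y + g y) ∧ (⨅ y, (l y + g y)) = f x + g x := by
  set M := Matrix.toEuclideanLin (H + lam • 1)
  have hQ : ∀ (t : ℝ) v, (1/2) * ⟪t • v, M (t • v)⟫ = t ^ 2 * ((1/2) * ⟪v, M v⟫) := by
    intro t v
    rw [map_smul, real_inner_smul_left, real_inner_smul_right]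
    ring
  have h_prox : ∀ z, l x + g x ≤ l z + g z + (1/2) * ⟪z - x, M (z - x)⟫ := by
    simpa using hmin
  have h_glob : ∀ y, l x + g x ≤ l y + g y :=
    ConvexOn.le_of_le_add_quadratic (φ := fun z => l z + g z)
      (Q := fun v => (1/2) * ⟪v, M v⟫) (hl.add hg) hQ h_prox
  refine ⟨h_glob, le_antisymm ?_ ?_⟩
  · exact htight ▸ ciInf_le ⟨l x + g x, forall_mem_range.2 h_glob⟩ x
  · exact htight ▸ le_ciInf h_glob

/-- Tentative-update setting: if `x⁺ = x`, then `x` globally minimizes `l + g`, and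
consequently the lower bound `inf (l + g)` equals `f(x) + g(x)`, i.e. it is tight. -/
theorem stmt_4 (n : ℕ)
    (l g f : EuclideanSpace ℝ (Fin n) → ℝ)
    (hl : ConvexOn ℝ Set.univ l) (hg : ConvexOn ℝ Set.univ g)
    (H : Matrix (Fin n) (Fin n) ℝ)
    (hH : ∀ z : EuclideanSpace ℝ (Fin n), 0 ≤ ⟪z, Matrix.toEuclideanLin H z⟫)
    (lam : ℝ) (hlam : 0 < lam)
    (x : EuclideanSpace ℝ (Fin n))
    (hf : ConvexOn ℝ Set.univ f) (hfd : Differentiable ℝ f)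
    (hle : ∀ y, l y ≤ f y) (htight : l x = f x)
    (hmin : ∀ y,
      l x + g x + (1/2) * ⟪x - x, Matrix.toEuclideanLin (H + lam • 1) (x - x)⟫ ≤
      l y + g y + (1/2) * ⟪y - x, Matrix.toEuclideanLin (H + lam • 1) (y - x)⟫) :
    (∀ y, l x + g x ≤ l y + g y) ∧ (⨅ y, (l y + g y)) = f x + g x :=
  stmt_4_general n l g f hl hg H lam x htight hmin
end

section
/- Assume the tentative-update setting with x⁺ ≠ x, and additionally that f : ℝⁿ → ℝ is convex and differentiable with l(y) ≤ f(y) for all y ∈ ℝⁿ and l(x) = f(x). Let h = f + g. Then the one-sided directional derivative h'(x; v) = lim_{t → 0⁺} ( h(x + t v) − h(x) ) / t exists and satisfies h'(x; v) < −(1/2)⟨v, (H + λI)v⟩ < 0; in particular v is a descent direction for h at x. -/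
/-!
Write `v = x⁺ − x` and `Q = ⟨v, (H + λI)v⟩ > 0`. Comparing the value of the model at `x⁺` with
its value at the midpoint `x + v/2` and using convexity of `l + g` gives
`(l + g)(x⁺) − (l + g)(x) ≤ −(3/4) Q`. Along the line `t ↦ x + t v` the difference quotients of
`g` decrease to a limit bounded by `g(x⁺) − g(x)`, and since `l` touches the differentiable `f`
from below at `x`, `f'(x; v)` is bounded by `l(x⁺) − l(x)` (compare left difference quotients).
Hence `h'(x; v) ≤ −(3/4) Q < −(1/2) Q < 0`.
-/

open scoped RealInnerProductSpace

open Set Filter Topology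

section LineRestriction

variable {E : Type*} [AddCommGroup E] [Module ℝ E] {g : E → ℝ}

theorem ConvexOn.comp_add_smul (hg : ConvexOn ℝ univ g) (x v : E) :
    ConvexOn ℝ univ (fun t : ℝ => g (x + t • v)) := by
  have hline : (fun t : ℝ => g (x + t • v)) = g ∘ AffineMap.lineMap x (x + v) := by
    funext t
    simp [AffineMap.lineMap_apply, add_comm]
  simpa [hline] using hg.comp_affineMap (AffineMap.lineMap x (x + v))

theorem ConvexOn.div_sub_le_sub (hg : ConvexOn ℝ univ g) (x v : E) {t : ℝ}
    (ht₀ : t ≠ 0) (ht₁ : t ≤ 1) :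
    (g (x + t • v) - g x) / t ≤ g (x + v) - g x := by
  simpa [slope_def_field] using
    (hg.comp_add_smul x v).slope_mono (mem_univ 0) ⟨mem_univ t, ht₀⟩
      ⟨mem_univ 1, one_ne_zero⟩ ht₁

theorem ConvexOn.exists_tendsto_div_sub (hg : ConvexOn ℝ univ g) (x v : E) :
    ∃ d, Tendsto (fun t : ℝ => (g (x + t • v) - g x) / t) (𝓝[>] 0) (𝓝 d) ∧
      d ≤ g (x + v) - g x := by
  set φ : ℝ → ℝ := fun t => g (x + t • v)
  have hφ : ConvexOn ℝ univ φ := hg.comp_add_smul x v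
  have h0 : (0 : ℝ) ∈ interior univ := by simp
  have hslope : slope φ 0 = fun t => (g (x + t • v) - g x) / t := by
    funext t
    simp [φ, slope_def_field]
  refine ⟨derivWithin φ (Ioi 0) 0, ?_, ?_⟩
  · rw [← hslope]
    exact (hasDerivWithinAt_iff_tendsto_slope' (lt_irrefl 0)).mp
      (hφ.hasDerivWithinAt_rightDeriv_of_mem_interior h0)
  · simpa [φ, slope_def_field] using
      hφ.rightDeriv_le_slope_of_mem_interior h0 (mem_univ 1) one_pos

end LineRestriction

theorem HasLineDerivAt.le_sub_of_convexOn_le {E : Type*} [NormedAddCommGroup E]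
    [NormedSpace ℝ E] {f l : E → ℝ} {x v : E} {D : ℝ} (hf : HasLineDerivAt ℝ f D x v)
    (hl : ConvexOn ℝ univ l) (hle : ∀ y, l y ≤ f y) (htouch : l x = f x) :
    D ≤ l (x + v) - l x := by
  refine le_of_tendsto hf.tendsto_slope_zero_left (eventually_nhdsWithin_of_forall ?_)
  intro t (ht : t < 0)
  calc t⁻¹ • (f (x + t • v) - f x) ≤ (l (x + t • v) - l x) / t := by
        rw [smul_eq_mul, inv_mul_eq_div, ← htouch]
        exact div_le_div_of_nonpos_of_le ht.le (by linarith [hle (x + t • v)])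
    _ ≤ l (x + v) - l x := hl.div_sub_le_sub x v ht.ne (by linarith)

theorem ConvexOn.sub_le_of_forall_le_add_inner {E : Type*} [NormedAddCommGroup E]
    [InnerProductSpace ℝ E] {φ : E → ℝ} (hφ : ConvexOn ℝ univ φ) (M : E →ₗ[ℝ] E) {x xp : E}
    (hmin : ∀ y, φ xp + (1/2) * ⟪xp - x, M (xp - x)⟫ ≤ φ y + (1/2) * ⟪y - x, M (y - x)⟫) :
    φ xp - φ x ≤ -(3/4) * ⟪xp - x, M (xp - x)⟫ := by
  have hmid := hmin (x + (1/2 : ℝ) • (xp - x))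
  have hconv : φ (x + (1/2 : ℝ) • (xp - x)) ≤ (1/2) * φ x + (1/2) * φ xp := by
    have h := hφ.2 (mem_univ x) (mem_univ xp) (by norm_num : (0 : ℝ) ≤ 1/2)
      (by norm_num : (0 : ℝ) ≤ 1/2) (by norm_num)
    have hpt : x + (1/2 : ℝ) • (xp - x) = (1/2 : ℝ) • x + (1/2 : ℝ) • xp := by module
    rw [hpt]
    simpa using h
  rw [add_sub_cancel_left, map_smul, real_inner_smul_left, real_inner_smul_right] at hmid
  linarith

theorem inner_toEuclideanLin_add_smul_one {n : ℕ} (H : Matrix (Fin n) (Fin n) ℝ) (lam : ℝ)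
    (z : EuclideanSpace ℝ (Fin n)) :
    ⟪z, Matrix.toEuclideanLin (H + lam • 1) z⟫ = ⟪z, Matrix.toEuclideanLin H z⟫ + lam * ‖z‖ ^ 2 := by
  simp [inner_add_right, real_inner_smul_right]

theorem stmt_7_general (n : ℕ)
    (l g f : EuclideanSpace ℝ (Fin n) → ℝ)
    (hl : ConvexOn ℝ Set.univ l) (hg : ConvexOn ℝ Set.univ g)
    (H : Matrix (Fin n) (Fin n) ℝ)
    (hH : ∀ z : EuclideanSpace ℝ (Fin n), 0 ≤ ⟪z, Matrix.toEuclideanLin H z⟫)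
    (lam : ℝ) (hlam : 0 < lam)
    (x xp : EuclideanSpace ℝ (Fin n))
    (hmin : ∀ y,
      l xp + g xp + (1/2) * ⟪xp - x, Matrix.toEuclideanLin (H + lam • 1) (xp - x)⟫ ≤
      l y + g y + (1/2) * ⟪y - x, Matrix.toEuclideanLin (H + lam • 1) (y - x)⟫)
    (hne : xp ≠ x)
    (hfd : Differentiable ℝ f)
    (hle : ∀ y, l y ≤ f y) (htight : l x = f x) :
    ∃ d : ℝ,
      Filter.Tendsto (fun t : ℝ => ((f + g) (x + t • (xp - x)) - (f + g) x) / t)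
        (nhdsWithin 0 (Set.Ioi 0)) (nhds d) ∧
      d < -(1/2) * ⟪xp - x, Matrix.toEuclideanLin (H + lam • 1) (xp - x)⟫ ∧
      -(1/2) * ⟪xp - x, Matrix.toEuclideanLin (H + lam • 1) (xp - x)⟫ < 0 := by
  set v := xp - x
  have hxp : x + v = xp := add_sub_cancel x xp
  have hQ : 0 < ⟪v, Matrix.toEuclideanLin (H + lam • 1) v⟫ := by
    rw [inner_toEuclideanLin_add_smul_one]
    have hv : 0 < ‖v‖ := norm_pos_iff.mpr (sub_ne_zero.mpr hne)
    linarith [hH v, mul_pos hlam (pow_pos hv 2)]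
  have hdescent := (hl.add hg).sub_le_of_forall_le_add_inner _ hmin
  have hfD := (hfd x).hasFDerivAt.hasLineDerivAt v
  have hf_le := hfD.le_sub_of_convexOn_le hl hle htight
  obtain ⟨dg, hdg, hdg_le⟩ := hg.exists_tendsto_div_sub x v
  rw [hxp] at hf_le hdg_le
  refine ⟨fderiv ℝ f x v + dg, ?_, ?_, by linarith⟩
  · refine (hfD.tendsto_slope_zero_right.add hdg).congr fun t => ?_
    simp only [Pi.add_apply, smul_eq_mul]
    ring
  · simp only [Pi.add_apply] at hdescent
    linarith

/-- Tentative-update setting with `x⁺ ≠ x`, `l` a convex minorant of the convex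
differentiable `f` tight at `x`, and `h = f + g`: the one-sided directional derivative
`h'(x; v) = lim_{t→0⁺} (h(x + tv) − h(x))/t` exists and satisfies
`h'(x; v) < −(1/2)⟨v, (H + λI)v⟩ < 0`, so `v = x⁺ − x` is a descent direction. -/
theorem stmt_7 (n : ℕ)
    (l g f : EuclideanSpace ℝ (Fin n) → ℝ)
    (hl : ConvexOn ℝ Set.univ l) (hg : ConvexOn ℝ Set.univ g)
    (H : Matrix (Fin n) (Fin n) ℝ)
    (hH : ∀ z : EuclideanSpace ℝ (Fin n), 0 ≤ ⟪z, Matrix.toEuclideanLin H z⟫)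
    (lam : ℝ) (hlam : 0 < lam)
    (x xp : EuclideanSpace ℝ (Fin n))
    (hmin : ∀ y,
      l xp + g xp + (1/2) * ⟪xp - x, Matrix.toEuclideanLin (H + lam • 1) (xp - x)⟫ ≤
      l y + g y + (1/2) * ⟪y - x, Matrix.toEuclideanLin (H + lam • 1) (y - x)⟫)
    (hne : xp ≠ x)
    (hf : ConvexOn ℝ Set.univ f) (hfd : Differentiable ℝ f)
    (hle : ∀ y, l y ≤ f y) (htight : l x = f x) :
    ∃ d : ℝ,
      Filter.Tendsto (fun t : ℝ => ((f + g) (x + t • (xp - x)) - (f + g) x) / t)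
        (nhdsWithin 0 (Set.Ioi 0)) (nhds d) ∧
      d < -(1/2) * ⟪xp - x, Matrix.toEuclideanLin (H + lam • 1) (xp - x)⟫ ∧
      -(1/2) * ⟪xp - x, Matrix.toEuclideanLin (H + lam • 1) (xp - x)⟫ < 0 :=
  stmt_7_general n l g f hl hg H hH lam hlam x xp hmin hne hfd hle htight
end

section
/- Let f : ℝⁿ → ℝ be convex and differentiable with an L-Lipschitz gradient (L > 0), let M ≥ 1 be an integer, let k ≥ 0, set m = max{0, k − M + 1}, and let x⁰, x¹, …, x^{k+1} ∈ ℝⁿ. Define l(x) = max_{i=m,…,k} ( f(xⁱ) + ⟨∇f(xⁱ), x − xⁱ⟩ ). Then every subgradient s of l at x^{k+1} satisfies ‖∇f(x^{k+1}) − s‖ ≤ L · M · max_{j=m,…,k} ‖x^{j+1} − xʲ‖. -/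
open scoped RealInnerProductSpace

/-!
Write `v = ∇f(x^{k+1}) - s`. Testing the subgradient inequality of `l` at `y = x^{k+1} - v`
shows that one of the gradients `∇f(xⁱ)`, `m ≤ i ≤ k`, satisfies `⟪∇f(xⁱ), v⟫ ≤ ⟪s, v⟫`, which forces
`‖v‖ ≤ ‖∇f(x^{k+1}) - ∇f(xⁱ)‖`. The Lipschitz bound and the telescoping estimate
`‖x^{k+1} - xⁱ‖ ≤ (k + 1 - i) · max_j ‖x^{j+1} - xʲ‖` with `k + 1 - i ≤ M` finish the proof.
-/

open Finset

section Subgradient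

variable {ι E : Type*} [NormedAddCommGroup E] [InnerProductSpace ℝ E]

theorem exists_inner_le_of_forall_sup'_add_inner_le (I : Finset ι) (hI : I.Nonempty)
    (c : ι → ℝ) (a p : ι → E) (x s : E)
    (hs : ∀ y, I.sup' hI (fun i => c i + ⟪a i, x - p i⟫) + ⟪s, y - x⟫ ≤
      I.sup' hI (fun i => c i + ⟪a i, y - p i⟫))
    (v : E) : ∃ i ∈ I, ⟪a i, v⟫ ≤ ⟪s, v⟫ := by
  obtain ⟨i, hi, hmin⟩ := I.exists_mem_eq_inf' hI (fun i => ⟪a i, v⟫)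
  refine ⟨i, hi, ?_⟩
  have hdrop : I.sup' hI (fun j => c j + ⟪a j, (x - v) - p j⟫) ≤
      I.sup' hI (fun j => c j + ⟪a j, x - p j⟫) - ⟪a i, v⟫ := by
    refine sup'_le _ _ fun j hj => ?_
    have hle : c j + ⟪a j, x - p j⟫ ≤ I.sup' hI (fun j => c j + ⟪a j, x - p j⟫) :=
      le_sup' (fun j => c j + ⟪a j, x - p j⟫) hj
    have hmin_le : ⟪a i, v⟫ ≤ ⟪a j, v⟫ := hmin ▸ inf'_le (fun j => ⟪a j, v⟫) hj
    rw [sub_right_comm, inner_sub_right]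
    linarith
  have htest := hs (x - v)
  rw [sub_sub_cancel_left, inner_neg_right] at htest
  linarith

theorem norm_sub_le_norm_sub_of_inner_le {g s a : E} (h : ⟪a, g - s⟫ ≤ ⟪s, g - s⟫) :
    ‖g - s‖ ≤ ‖g - a‖ := by
  have hsq : ‖g - s‖ * ‖g - s‖ ≤ ‖g - a‖ * ‖g - s‖ :=
    calc ‖g - s‖ * ‖g - s‖ = ⟪g - a, g - s⟫ + (⟪a, g - s⟫ - ⟪s, g - s⟫) := by
          rw [← real_inner_self_eq_norm_mul_norm, inner_sub_left _ a, inner_sub_left g s]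
          ring
      _ ≤ ⟪g - a, g - s⟫ := by linarith
      _ ≤ ‖g - a‖ * ‖g - s‖ := real_inner_le_norm _ _
  rcases (norm_nonneg (g - s)).eq_or_lt with h0 | hpos
  · exact h0 ▸ norm_nonneg _
  · exact le_of_mul_le_mul_right hsq hpos

end Subgradient

theorem norm_sub_le_mul_sup'_norm_sub_succ {E : Type*} [SeminormedAddCommGroup E]
    (xs : ℕ → E) {i j : ℕ} (hij : i ≤ j) (S : Finset ℕ) (hS : S.Nonempty) (hsub : Ico i j ⊆ S) :
    ‖xs j - xs i‖ ≤ ((j - i : ℕ) : ℝ) * S.sup' hS (fun l => ‖xs (l + 1) - xs l‖) := by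
  calc ‖xs j - xs i‖ = dist (xs i) (xs j) := by rw [dist_comm, dist_eq_norm]
    _ ≤ ∑ l ∈ Ico i j, dist (xs l) (xs (l + 1)) := dist_le_Ico_sum_dist xs hij
    _ ≤ (Ico i j).card • S.sup' hS (fun l => ‖xs (l + 1) - xs l‖) := by
        refine sum_le_card_nsmul _ _ _ fun l hl => ?_
        rw [dist_comm, dist_eq_norm]
        exact le_sup' (fun l => ‖xs (l + 1) - xs l‖) (hsub hl)
    _ = ((j - i : ℕ) : ℝ) * S.sup' hS (fun l => ‖xs (l + 1) - xs l‖) := by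
        rw [Nat.card_Ico, nsmul_eq_mul]

/-- Accuracy of the limited-memory piecewise affine minorant: with
`m = max{0, k − M + 1}` and `l(x) = max_{i=m,…,k} ( f(xⁱ) + ⟨∇f(xⁱ), x − xⁱ⟩ )`,
every subgradient `s` of `l` at `x^{k+1}` satisfies
`‖∇f(x^{k+1}) − s‖ ≤ L · M · max_{j=m,…,k} ‖x^{j+1} − xʲ‖`. -/
theorem stmt_16 (n : ℕ)
    (f : EuclideanSpace ℝ (Fin n) → ℝ)
    (L : ℝ) (hL : 0 < L)
    (hLip : ∀ y z, ‖gradient f y - gradient f z‖ ≤ L * ‖y - z‖)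
    (M : ℕ) (hM : 1 ≤ M) (k : ℕ)
    (xs : ℕ → EuclideanSpace ℝ (Fin n))
    (s : EuclideanSpace ℝ (Fin n))
    (hs : ∀ y,
      ((Finset.Icc (k + 1 - M) k).sup' (Finset.nonempty_Icc.mpr (by omega))
        fun i => f (xs i) + ⟪gradient f (xs i), xs (k+1) - xs i⟫) + ⟪s, y - xs (k+1)⟫ ≤
      ((Finset.Icc (k + 1 - M) k).sup' (Finset.nonempty_Icc.mpr (by omega))
        fun i => f (xs i) + ⟪gradient f (xs i), y - xs i⟫)) :
    ‖gradient f (xs (k+1)) - s‖ ≤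
      L * M * ((Finset.Icc (k + 1 - M) k).sup' (Finset.nonempty_Icc.mpr (by omega))
        fun j => ‖xs (j+1) - xs j‖) := by
  set I := Icc (k + 1 - M) k
  have hI : I.Nonempty := nonempty_Icc.mpr (by omega)
  set D := I.sup' hI fun j => ‖xs (j + 1) - xs j‖
  obtain ⟨i, hi, hinner⟩ := exists_inner_le_of_forall_sup'_add_inner_le I hI
    (fun i => f (xs i)) (fun i => gradient f (xs i)) xs (xs (k + 1)) s hs
    (gradient f (xs (k + 1)) - s)
  obtain ⟨hmi, hik⟩ := mem_Icc.mp hi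
  have hD : 0 ≤ D := le_sup'_of_le _ hi (norm_nonneg _)
  have hdist : ‖xs (k + 1) - xs i‖ ≤ M * D :=
    (norm_sub_le_mul_sup'_norm_sub_succ xs (by omega) I hI
      fun l hl => mem_Icc.mpr (by simp only [mem_Ico] at hl; omega)).trans
      (mul_le_mul_of_nonneg_right (Nat.cast_le.mpr (by omega)) hD)
  calc ‖gradient f (xs (k + 1)) - s‖ ≤ ‖gradient f (xs (k + 1)) - gradient f (xs i)‖ :=
        norm_sub_le_norm_sub_of_inner_le hinner
    _ ≤ L * ‖xs (k + 1) - xs i‖ := hLip _ _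
    _ ≤ L * (M * D) := mul_le_mul_of_nonneg_left hdist hL.le
    _ = L * M * D := (mul_assoc _ _ _).symm
end

section
/- Let F₁, …, F_N : ℝⁿ → ℝ be convex functions and let w₁, …, w_N > 0. Then the function φ : ℝⁿ × (0, ∞) → ℝ defined by φ(x, α) = α · log( Σ_{i=1}^N wᵢ · exp( Fᵢ(x) / α ) ) is jointly convex in (x, α) on ℝⁿ × (0, ∞). -/
/-!
The weighted log-sum-exp function `t ↦ log Σᵢ wᵢ exp tᵢ` is convex (Hölder's inequality with
exponents `a + b = 1`) and monotone. Its perspective `(y, α) ↦ α · log Σᵢ wᵢ exp (yᵢ / α)` is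
therefore jointly convex on `ℝᴺ × (0, ∞)` and still monotone in `y`, and `φ(x, α)` is this
perspective evaluated at `((Fᵢ x)ᵢ, α)`. Precomposing a convex function that is monotone in `y`
with a map whose components are convex preserves convexity.
-/

open Real Set

theorem Real.sum_rpow_mul_rpow_le_of_add_eq_one {ι : Type*} (s : Finset ι) {f g : ι → ℝ}
    (hf : ∀ i ∈ s, 0 ≤ f i) (hg : ∀ i ∈ s, 0 ≤ g i)
    (hfs : 0 < ∑ i ∈ s, f i) (hgs : 0 < ∑ i ∈ s, g i)
    {a b : ℝ} (ha : 0 ≤ a) (hb : 0 ≤ b) (hab : a + b = 1) :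
    ∑ i ∈ s, f i ^ a * g i ^ b ≤ (∑ i ∈ s, f i) ^ a * (∑ i ∈ s, g i) ^ b := by
  set A := ∑ i ∈ s, f i
  set B := ∑ i ∈ s, g i
  -- weighted AM-GM applied to the normalised terms `f i / A` and `g i / B`
  have hterm : ∀ i ∈ s,
      f i ^ a * g i ^ b ≤ (a * (f i / A) + b * (g i / B)) * (A ^ a * B ^ b) := by
    intro i hi
    calc f i ^ a * g i ^ b = (f i / A) ^ a * (g i / B) ^ b * (A ^ a * B ^ b) := by
          rw [div_rpow (hf i hi) hfs.le, div_rpow (hg i hi) hgs.le]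
          field_simp
      _ ≤ (a * (f i / A) + b * (g i / B)) * (A ^ a * B ^ b) := by
          gcongr
          exact geom_mean_le_arith_mean2_weighted ha hb (div_nonneg (hf i hi) hfs.le)
            (div_nonneg (hg i hi) hgs.le) hab
  calc ∑ i ∈ s, f i ^ a * g i ^ b
      ≤ ∑ i ∈ s, (a * (f i / A) + b * (g i / B)) * (A ^ a * B ^ b) := Finset.sum_le_sum hterm
    _ = A ^ a * B ^ b := by
      rw [← Finset.sum_mul, Finset.sum_add_distrib, ← Finset.mul_sum, ← Finset.mul_sum,
        ← Finset.sum_div, ← Finset.sum_div,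
        div_self hfs.ne', div_self hgs.ne', mul_one, mul_one, hab, one_mul]

theorem Real.convexOn_log_sum_exp {ι : Type*} [Fintype ι] [Nonempty ι] :
    ConvexOn ℝ univ fun t : ι → ℝ => log (∑ i, exp (t i)) := by
  refine ⟨convex_univ, fun u _ v _ a b ha hb hab => ?_⟩
  have hpos : ∀ t : ι → ℝ, 0 < ∑ i, exp (t i) := fun t =>
    Finset.sum_pos (fun i _ => exp_pos _) Finset.univ_nonempty
  have hexp : ∀ i, exp ((a • u + b • v) i) = exp (u i) ^ a * exp (v i) ^ b := fun i => by
    simp only [Pi.add_apply, Pi.smul_apply, smul_eq_mul, exp_add, ← exp_mul, mul_comm]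
  calc log (∑ i, exp ((a • u + b • v) i))
      ≤ log ((∑ i, exp (u i)) ^ a * (∑ i, exp (v i)) ^ b) := by
        simp only [hexp]
        exact log_le_log (Finset.sum_pos (fun i _ => by positivity) Finset.univ_nonempty) <|
          sum_rpow_mul_rpow_le_of_add_eq_one _
            (fun i _ => (exp_pos _).le) (fun i _ => (exp_pos _).le) (hpos u) (hpos v) ha hb hab
    _ = a • log (∑ i, exp (u i)) + b • log (∑ i, exp (v i)) := by
        rw [log_mul (rpow_pos_of_pos (hpos u) a).ne' (rpow_pos_of_pos (hpos v) b).ne',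
          log_rpow (hpos u), log_rpow (hpos v), smul_eq_mul, smul_eq_mul]

theorem Real.convexOn_log_sum_mul_exp {ι : Type*} [Fintype ι] [Nonempty ι] {w : ι → ℝ}
    (hw : ∀ i, 0 < w i) :
    ConvexOn ℝ univ fun t : ι → ℝ => log (∑ i, w i * exp (t i)) := by
  refine (convexOn_log_sum_exp.translate_right fun i => log (w i)).congr fun _ _ => ?_
  simp only [Function.comp_apply, Pi.add_apply, exp_add, exp_log (hw _)]

theorem Real.monotone_log_sum_mul_exp {ι : Type*} [Fintype ι] [Nonempty ι] {w : ι → ℝ}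
    (hw : ∀ i, 0 < w i) :
    Monotone fun t : ι → ℝ => log (∑ i, w i * exp (t i)) := fun _ _ huv =>
  log_le_log (Finset.sum_pos (fun i _ => mul_pos (hw i) (exp_pos _)) Finset.univ_nonempty) <|
    Finset.sum_le_sum fun i _ => mul_le_mul_of_nonneg_left (exp_le_exp.2 (huv i)) (hw i).le

theorem ConvexOn.perspective {E : Type*} [AddCommGroup E] [Module ℝ E] {g : E → ℝ}
    (hg : ConvexOn ℝ univ g) :
    ConvexOn ℝ (univ ×ˢ Ioi 0) fun p : E × ℝ => p.2 * g (p.2⁻¹ • p.1) := by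
  refine ⟨convex_univ.prod (convex_Ioi 0), ?_⟩
  rintro ⟨x, s⟩ ⟨-, hs : 0 < s⟩ ⟨y, t⟩ ⟨-, ht : 0 < t⟩ a b ha hb hab
  simp only [Prod.smul_mk, Prod.mk_add_mk, smul_eq_mul]
  have hr : 0 < a * s + b * t := by
    rcases ha.eq_or_lt with rfl | ha
    · simp_all
    · positivity
  -- with `r = a s + b t`, the point `(a x + b y) / r` averages `x / s` and `y / t` with weights
  -- `a s / r` and `b t / r`
  have hcomb : (a * s + b * t)⁻¹ • (a • x + b • y)
      = (a * s / (a * s + b * t)) • (s⁻¹ • x) + (b * t / (a * s + b * t)) • (t⁻¹ • y) := by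
    simp only [smul_smul, smul_add]
    congr 2 <;> field_simp
  have hweights : a * s / (a * s + b * t) + b * t / (a * s + b * t) = 1 := by
    field_simp
  calc (a * s + b * t) * g ((a * s + b * t)⁻¹ • (a • x + b • y))
      ≤ (a * s + b * t) * ((a * s / (a * s + b * t)) • g (s⁻¹ • x)
          + (b * t / (a * s + b * t)) • g (t⁻¹ • y)) := by
        rw [hcomb]
        gcongr
        exact hg.2 trivial trivial (by positivity) (by positivity) hweights
    _ = a • (s * g (s⁻¹ • x)) + b • (t * g (t⁻¹ • y)) := by
        simp only [smul_eq_mul]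
        field_simp

theorem ConvexOn.comp_pi_prod_of_monotone {ι E β : Type*} [AddCommGroup E] [Module ℝ E]
    [AddCommGroup β] [Module ℝ β] {s : Set E} {T : Set β} {P : (ι → ℝ) × β → ℝ}
    {F : ι → E → ℝ} (hs : Convex ℝ s) (hP : ConvexOn ℝ (univ ×ˢ T) P)
    (hPmono : ∀ t ∈ T, Monotone fun y => P (y, t)) (hF : ∀ i, ConvexOn ℝ s (F i)) :
    ConvexOn ℝ (s ×ˢ T) fun p : E × β => P (fun i => F i p.1, p.2) := by
  have hT : Convex ℝ T := fun t ht u hu a b ha hb hab =>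
    (hP.1 (show ((0 : ι → ℝ), t) ∈ univ ×ˢ T from ⟨trivial, ht⟩)
      (show ((0 : ι → ℝ), u) ∈ univ ×ˢ T from ⟨trivial, hu⟩) ha hb hab).2
  refine ⟨hs.prod hT, ?_⟩
  rintro ⟨x, t⟩ ⟨hx, ht⟩ ⟨y, u⟩ ⟨hy, hu⟩ a b ha hb hab
  have hmem : a • ((fun i => F i x), t) + b • ((fun i => F i y), u) ∈ univ ×ˢ T :=
    hP.1 ⟨trivial, ht⟩ ⟨trivial, hu⟩ ha hb hab
  calc P (fun i => F i (a • x + b • y), a • t + b • u)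
      ≤ P (a • (fun i => F i x) + b • (fun i => F i y), a • t + b • u) :=
        hPmono _ hmem.2 fun i => (hF i).2 hx hy ha hb hab
    _ = P (a • ((fun i => F i x), t) + b • ((fun i => F i y), u)) := rfl
    _ ≤ a • P ((fun i => F i x), t) + b • P ((fun i => F i y), u) :=
        hP.2 ⟨trivial, ht⟩ ⟨trivial, hu⟩ ha hb hab

/-- The sample-average entropic value-at-risk objective
`φ(x, α) = α · log( Σᵢ wᵢ exp(Fᵢ(x)/α) )`, with each `Fᵢ` convex and `wᵢ > 0`, is jointly
convex on `ℝⁿ × (0, ∞)`. -/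
theorem stmt_17 (n N : ℕ) (hN : 0 < N)
    (F : Fin N → (EuclideanSpace ℝ (Fin n) → ℝ))
    (hF : ∀ i, ConvexOn ℝ Set.univ (F i))
    (w : Fin N → ℝ) (hw : ∀ i, 0 < w i) :
    ConvexOn ℝ ((Set.univ : Set (EuclideanSpace ℝ (Fin n))) ×ˢ Set.Ioi (0:ℝ))
      (fun p : EuclideanSpace ℝ (Fin n) × ℝ =>
        p.2 * Real.log (∑ i, w i * Real.exp (F i p.1 / p.2))) := by
  have : Nonempty (Fin N) := Fin.pos_iff_nonempty.1 hN
  have hmono : ∀ α ∈ Ioi (0 : ℝ),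
      Monotone fun y : Fin N → ℝ => α * log (∑ i, w i * exp ((α⁻¹ • y) i)) := fun α hα =>
    ((monotone_log_sum_mul_exp hw).comp (monotone_id.const_smul (inv_nonneg.2 hα.le))).const_mul
      hα.le
  refine ((convexOn_log_sum_mul_exp hw).perspective.comp_pi_prod_of_monotone convex_univ hmono
    hF).congr fun p _ => ?_
  simp only [Pi.smul_apply, smul_eq_mul, div_eq_inv_mul]
end
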